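/- arXiv:1112.3839 — 4 statements merged into one kernel-verified Lean document; each statement's English description precedes it below -/
import Mathlib

section
/- If X is a symmetric positive definite matrix with X ≥ I and B is an invertible square matrix, then X − X B (I + Bᵀ X B)⁻¹ Bᵀ X = (X⁻¹ + B Bᵀ)⁻¹ < B⁻ᵀ B⁻¹ (in the Loewner order). -/
/-!
The identity is the Woodbury formula applied to `X⁻¹ + B Bᵀ`. For the bound, put `M = B Bᵀ`,
so that `B⁻ᵀ B⁻¹ = M⁻¹`; Woodbury once more gives
`M⁻¹ - (X⁻¹ + M)⁻¹ = M⁻¹ (X + M⁻¹)⁻¹ M⁻¹`, a congruence of a positive definite matrix.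
-/

open Matrix

open scoped ComplexOrder

namespace Matrix

variable {n m K : Type*} [Fintype n] [DecidableEq n] [Fintype m] [DecidableEq m]

theorem inv_add_mul_eq_sub [Field K] {X : Matrix n n K} (U : Matrix n m K) (V : Matrix m n K)
    (hX : IsUnit X) (hXUV : IsUnit (1 + V * X * U)) :
    (X⁻¹ + U * V)⁻¹ = X - X * U * (1 + V * X * U)⁻¹ * V * X := by
  have hinv : X⁻¹⁻¹ = X := nonsing_inv_nonsing_inv X ((isUnit_iff_isUnit_det X).1 hX)
  have := add_mul_mul_inv_eq_sub X⁻¹ U 1 V (isUnit_nonsing_inv_iff.2 hX) isUnit_one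
    (by rwa [inv_one, hinv])
  simpa only [Matrix.mul_one, inv_one, hinv] using this

theorem PosDef.inv_sub_inv_add [RCLike K] {A M : Matrix n n K} (hA : A.PosDef) (hM : M.PosDef) :
    (M⁻¹ - (A + M)⁻¹).PosDef := by
  have hsum : (A⁻¹ + M⁻¹).PosDef := hA.inv.add hM.inv
  have hwoodbury := add_mul_mul_inv_eq_sub M 1 A 1 hM.isUnit hA.isUnit
    (by simpa using hsum.isUnit)
  simp only [mul_one, one_mul] at hwoodbury
  rw [add_comm, hwoodbury, sub_sub_cancel]
  have hconj := (IsUnit.posDef_star_left_conjugate_iff hM.inv.isUnit).2 hsum.inv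
  rwa [star_eq_conjTranspose, hM.isHermitian.inv.eq] at hconj

end Matrix

theorem riccati_step_bound_general {n : Type*} [Fintype n] [DecidableEq n]
    (X B : Matrix n n ℝ) (hX : X.PosDef)
    (hB : IsUnit B.det) :
    X - X * B * (1 + Bᵀ * X * B)⁻¹ * Bᵀ * X = (X⁻¹ + B * Bᵀ)⁻¹ ∧
    ((B⁻¹)ᵀ * B⁻¹ - (X⁻¹ + B * Bᵀ)⁻¹).PosDef := by
  have hBu : IsUnit B := (isUnit_iff_isUnit_det B).2 hB
  have hBBt : (B * Bᵀ).PosDef := by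
    simpa using PosDef.mul_conjTranspose_self B (vecMul_injective_of_isUnit hBu)
  have hpencil : (1 + Bᵀ * X * B).PosDef := by
    simpa using PosDef.one.add_posSemidef (hX.posSemidef.conjTranspose_mul_mul_same B)
  refine ⟨(inv_add_mul_eq_sub B Bᵀ hX.isUnit hpencil.isUnit).symm, ?_⟩
  rw [transpose_nonsing_inv, ← Matrix.mul_inv_rev]
  exact hX.inv.inv_sub_inv_add hBBt

theorem riccati_step_bound {n : Type*} [Fintype n] [DecidableEq n]
    (X B : Matrix n n ℝ) (hX : X.PosDef) (hXI : (X - 1).PosSemidef)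
    (hB : IsUnit B.det) :
    X - X * B * (1 + Bᵀ * X * B)⁻¹ * Bᵀ * X = (X⁻¹ + B * Bᵀ)⁻¹ ∧
    ((B⁻¹)ᵀ * B⁻¹ - (X⁻¹ + B * Bᵀ)⁻¹).PosDef :=
  riccati_step_bound_general X B hX hB
end

section
/- Let X solve the discrete algebraic Riccati equation X = AᵀXA − AᵀXB(I + BᵀXB)⁻¹BᵀXA + I with B invertible. Then X − I ≥ (σ_min(B)²/(σ_min(B)² + 1)) AᵀB⁻ᵀB⁻¹A in the Loewner order. -/
/-!
By the Woodbury identity the Riccati equation says `X - 1 = Aᵀ (X⁻¹ + B Bᵀ)⁻¹ A`; in particular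
`1 ≤ X`, so `X⁻¹ ≤ 1`. If `s` is the smallest eigenvalue of `Bᵀ B`, then `(Bᵀ B)⁻¹ ≤ s⁻¹`, that is
`1 ≤ s⁻¹ B Bᵀ`, hence `X⁻¹ + B Bᵀ ≤ (s⁻¹ + 1) B Bᵀ`. Inversion reverses the Loewner order, so
`s / (s + 1) • B⁻ᵀ B⁻¹ ≤ (X⁻¹ + B Bᵀ)⁻¹`, and conjugating by `A` gives the bound.
-/

open Matrix
open scoped MatrixOrder ComplexOrder

namespace Matrix

section RCLike

variable {n 𝕜 : Type*} [Fintype n] [DecidableEq n] [RCLike 𝕜]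

/-- Both Schur complements of `[[T, 1], [1, S⁻¹]]` are positive semidefinite together. -/
theorem PosDef.inv_le_inv {S T : Matrix n n 𝕜} (hS : S.PosDef) (hST : S ≤ T) : T⁻¹ ≤ S⁻¹ := by
  have hT : T.PosDef := by simpa using hS.add_posSemidef hST
  have := hT.isUnit.invertible
  have := hS.inv.isUnit.invertible
  have hblock : (fromBlocks T 1 1ᴴ S⁻¹).PosSemidef := by
    rw [PosDef.fromBlocks₂₂ T 1 hS.inv]
    simpa [nonsing_inv_nonsing_inv _ (isUnit_iff_isUnit_det S |>.mp hS.isUnit)] using le_iff.mp hST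
  rw [PosDef.fromBlocks₁₁ 1 S⁻¹ hT] at hblock
  simpa [le_iff] using hblock

theorem IsHermitian.iInf_eigenvalues_smul_one_le {A : Matrix n n 𝕜} (hA : A.IsHermitian) :
    (⨅ i, hA.eigenvalues i) • (1 : Matrix n n 𝕜) ≤ A := by
  rw [← Algebra.algebraMap_eq_smul_one, algebraMap_le_iff_le_spectrum hA.isSelfAdjoint,
    hA.spectrum_real_eq_range_eigenvalues, Set.forall_mem_range]
  exact fun i => ciInf_le (Finite.bddBelow_range _) i

theorem PosDef.iInf_eigenvalues_pos [Nonempty n] {A : Matrix n n 𝕜} (hA : A.PosDef) :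
    0 < ⨅ i, hA.isHermitian.eigenvalues i := by
  obtain ⟨i, hi⟩ := exists_eq_ciInf_of_finite (f := hA.isHermitian.eigenvalues)
  exact hi ▸ hA.eigenvalues_pos i

end RCLike

section Real

variable {n : Type*} [Fintype n]

theorem mul_mul_transpose_le_mul_mul_transpose {M N : Matrix n n ℝ} (h : M ≤ N)
    (C : Matrix n n ℝ) : C * M * Cᵀ ≤ C * N * Cᵀ := by
  simpa [star_eq_conjTranspose] using star_right_conjugate_le_conjugate h C

variable [DecidableEq n]

theorem PosDef.inv_add_mul_transpose {X : Matrix n n ℝ} (hX : X.PosDef) (B : Matrix n n ℝ) :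
    (X⁻¹ + B * Bᵀ).PosDef :=
  hX.inv.add_posSemidef (by simpa using posSemidef_self_mul_conjTranspose B)

theorem one_le_inv_smul_mul_transpose {B : Matrix n n ℝ} (hB : IsUnit B.det) {s : ℝ}
    (hs : 0 < s) (h : s • 1 ≤ Bᵀ * B) : 1 ≤ s⁻¹ • (B * Bᵀ) := by
  have hinv : (Bᵀ * B)⁻¹ ≤ s⁻¹ • 1 := by
    have hscalar : (s • (1 : Matrix n n ℝ))⁻¹ = s⁻¹ • 1 :=
      inv_eq_left_inv (by simp [smul_smul, hs.ne'])
    simpa [hscalar] using (PosDef.one.smul hs).inv_le_inv h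
  have hcancel : B * (Bᵀ * B)⁻¹ * Bᵀ = 1 := by
    rw [mul_inv_rev, ← transpose_nonsing_inv, ← Matrix.mul_assoc, mul_nonsing_inv _ hB,
      Matrix.one_mul, ← transpose_mul, mul_nonsing_inv _ hB, transpose_one]
  simpa [hcancel] using mul_mul_transpose_le_mul_mul_transpose hinv B

theorem smul_transpose_inv_mul_inv_le_inv_inv_add_mul_transpose {B X : Matrix n n ℝ}
    (hB : IsUnit B.det) (hX : X.PosDef) (hX_ge : 1 ≤ X) {s : ℝ} (hs : 0 < s)
    (h : s • 1 ≤ Bᵀ * B) : (s / (s + 1)) • (B⁻¹ᵀ * B⁻¹) ≤ (X⁻¹ + B * Bᵀ)⁻¹ := by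
  have hW_le : X⁻¹ + B * Bᵀ ≤ (s⁻¹ + 1) • (B * Bᵀ) := by
    have hX_inv : X⁻¹ ≤ 1 := by simpa using PosDef.one.inv_le_inv hX_ge
    rw [add_smul, one_smul]
    exact add_le_add_left (hX_inv.trans (one_le_inv_smul_mul_transpose hB hs h)) _
  have hc : (s⁻¹ + 1)⁻¹ = s / (s + 1) := by field_simp; ring
  let := invertibleOfNonzero (by positivity : s⁻¹ + 1 ≠ 0)
  rw [← hc, ← invOf_eq_inv, transpose_nonsing_inv, ← mul_inv_rev,
    ← inv_smul _ _ (by simpa using hB.mul hB)]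
  exact (hX.inv_add_mul_transpose B).inv_le_inv hW_le

theorem sub_one_eq_of_riccati {A B X : Matrix n n ℝ} (hX : X.PosDef)
    (hric : X = Aᵀ * X * A - Aᵀ * X * B * (1 + Bᵀ * X * B)⁻¹ * Bᵀ * X * A + 1) :
    X - 1 = Aᵀ * (X⁻¹ + B * Bᵀ)⁻¹ * A := by
  have hX_det : IsUnit X.det := isUnit_iff_isUnit_det X |>.mp hX.isUnit
  have hG : (1 + Bᵀ * X * B).PosDef := by
    simpa using PosDef.one.add_posSemidef (hX.posSemidef.conjTranspose_mul_mul_same B)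
  have hwoodbury : (X⁻¹ + B * Bᵀ)⁻¹ = X - X * B * (1 + Bᵀ * X * B)⁻¹ * Bᵀ * X := by
    simpa [nonsing_inv_nonsing_inv X hX_det] using
      add_mul_mul_inv_eq_sub X⁻¹ B 1 Bᵀ hX.inv.isUnit isUnit_one
        (by simpa [nonsing_inv_nonsing_inv X hX_det] using hG.isUnit)
  rw [hwoodbury]
  conv_lhs => rw [hric]
  noncomm_ring

end Real

end Matrix

theorem riccati_loewner_bound {n : Type*} [Fintype n] [DecidableEq n] [Nonempty n]
    (A B X : Matrix n n ℝ) (hB : IsUnit B.det) (hX : X.PosDef)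
    (hric : X = Aᵀ * X * A - Aᵀ * X * B * (1 + Bᵀ * X * B)⁻¹ * Bᵀ * X * A + 1)
    (hBB : (Bᵀ * B).IsHermitian) :
    (X - 1 - ((⨅ i, hBB.eigenvalues i) / ((⨅ i, hBB.eigenvalues i) + 1)) •
      (Aᵀ * (B⁻¹)ᵀ * B⁻¹ * A)).PosSemidef := by
  have hBtB : (Bᵀ * B).PosDef := by
    simpa using PosDef.conjTranspose_mul_self B
      (mulVec_injective_iff_isUnit.mpr ((isUnit_iff_isUnit_det B).mpr hB))
  have hs : 0 < ⨅ i, hBB.eigenvalues i := hBtB.iInf_eigenvalues_pos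
  have hXsub := sub_one_eq_of_riccati hX hric
  have hX_ge : 1 ≤ X := by
    rw [le_iff, hXsub]
    simpa using (hX.inv_add_mul_transpose B).inv.posSemidef.conjTranspose_mul_mul_same A
  have hbound := mul_mul_transpose_le_mul_mul_transpose
    (smul_transpose_inv_mul_inv_le_inv_inv_add_mul_transpose hB hX hX_ge hs
      hBB.iInf_eigenvalues_smul_one_le) Aᵀ
  rw [← le_iff, hXsub]
  simpa [Matrix.mul_assoc] using hbound
end

section
/- Let n ≥ 2, let i ≠ j, A = e_i e_jᵀ (a rank-one matrix with a single nonzero entry 1 in position (i,j)), and ε > 0. Then X = I + (1/(1+ε²)) e_j e_jᵀ is the unique positive definite solution of the discrete algebraic Riccati equation Aᵀ X A − Aᵀ X (εI)(I + (εI)ᵀ X (εI))⁻¹ (εI)ᵀ X A = X − I. -/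
/-!
For `A = e_i e_jᵀ` the Riccati operator collapses to `Aᵀ Y A = Y_ii • e_j e_jᵀ` with
`Y = X - ε² X (1 + ε² X)⁻¹ X`, so every solution has the form `X = 1 + t • e_j e_jᵀ`. Such an `X`
fixes `e_i` from both sides (as `i ≠ j`), hence `e_i` is an eigenvector of `1 + ε² X` with
eigenvalue `1 + ε²`, and `Y_ii = 1 - ε² / (1 + ε²) = 1 / (1 + ε²)`; this forces
`t = 1 / (1 + ε²)`. Positive definiteness of `X` makes `1 + ε² X` invertible.
-/

open Matrix

section Riccati

variable {n : Type*} [Fintype n] [DecidableEq n]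

section CommRing

variable {R : Type*} [CommRing R]

noncomputable def riccati (A B X : Matrix n n R) : Matrix n n R :=
  Aᵀ * X * A - Aᵀ * X * B * (1 + Bᵀ * X * B)⁻¹ * Bᵀ * X * A

theorem riccati_smul_one (A X : Matrix n n R) (c : R) :
    riccati A (c • 1) X = Aᵀ * (X - c ^ 2 • (X * (1 + c ^ 2 • X)⁻¹ * X)) * A := by
  simp only [riccati, transpose_smul, transpose_one, Matrix.smul_mul, Matrix.mul_smul,
    Matrix.mul_one, Matrix.one_mul, smul_smul, Matrix.mul_sub, Matrix.sub_mul, Matrix.mul_assoc, sq]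

theorem riccati_single_smul_one (i j : n) (X : Matrix n n R) (c : R) :
    riccati (single i j 1) (c • 1) X
      = (X - c ^ 2 • (X * (1 + c ^ 2 • X)⁻¹ * X)) i i • single j j 1 := by
  rw [riccati_smul_one, transpose_single, single_mul_mul_single, smul_single, one_mul, mul_one,
    smul_eq_mul, mul_one]

theorem exists_eq_one_add_of_riccati_single_eq_sub_one {i j : n} {X : Matrix n n R} {c : R}
    (h : riccati (single i j 1) (c • 1) X = X - 1) : ∃ t : R, X = 1 + t • single j j 1 :=
  ⟨_, by rw [← sub_eq_iff_eq_add', ← h, riccati_single_smul_one]⟩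

end CommRing

section Field

variable {K : Type*} [Field K]

theorem sub_smul_mul_inv_mul_apply_of_fixed {X : Matrix n n K} {i : n}
    (hcol : X *ᵥ Pi.single i 1 = Pi.single i 1) (hrow : Pi.single i 1 ᵥ* X = Pi.single i 1)
    {c : K} (hN : IsUnit (1 + c • X).det) :
    (X - c • (X * (1 + c • X)⁻¹ * X)) i i = (1 + c)⁻¹ := by
  set e : n → K := Pi.single i 1
  set N := 1 + c • X
  have hNe : N *ᵥ e = (1 + c) • e := by
    simp only [N, add_mulVec, one_mulVec, smul_mulVec, hcol, add_smul, one_smul]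
  have hc : 1 + c ≠ 0 := by
    intro h
    rw [h, zero_smul] at hNe
    exact Pi.single_ne_zero_iff.mpr one_ne_zero (eq_zero_of_mulVec_eq_zero hN.ne_zero hNe)
  have hMe : N⁻¹ *ᵥ e = (1 + c)⁻¹ • e := by
    rw [← inv_smul_smul₀ hc (N⁻¹ *ᵥ e), ← mulVec_smul, ← hNe, mulVec_mulVec,
      nonsing_inv_mul _ hN, one_mulVec]
  have hentry (Y : Matrix n n K) : Y i i = e ⬝ᵥ (Y *ᵥ e) := by simp [e]
  rw [hentry (X - _), sub_mulVec, smul_mulVec, ← mulVec_mulVec, ← mulVec_mulVec, hcol, hMe,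
    dotProduct_sub, dotProduct_smul, dotProduct_mulVec, hrow]
  simp only [e, dotProduct_smul, dotProduct_single, Pi.single_eq_same, mul_one, smul_eq_mul]
  field_simp
  ring

theorem riccati_single_one_add_smul_single {i j : n} (hij : i ≠ j) (t c : K)
    (hN : IsUnit (1 + c ^ 2 • (1 + t • single j j (1 : K))).det) :
    riccati (single i j 1) (c • 1) (1 + t • single j j 1)
      = (1 + c ^ 2)⁻¹ • single j j (1 : K) := by
  rw [riccati_single_smul_one, sub_smul_mul_inv_mul_apply_of_fixed _ _ hN] <;>
    ext k <;> simp [one_apply, Pi.single_apply, hij.symm, eq_comm (a := k)]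

end Field

end Riccati

theorem riccati_rank_one_solution_general {n : Type*} [Fintype n] [DecidableEq n]
    (i j : n) (hij : i ≠ j) (ε : ℝ) :
    let A : Matrix n n ℝ := Matrix.single i j 1
    let B : Matrix n n ℝ := ε • 1
    let X : Matrix n n ℝ := 1 + (1 / (1 + ε ^ 2)) • Matrix.single j j 1
    X.PosDef ∧
    (Aᵀ * X * A - Aᵀ * X * B * (1 + Bᵀ * X * B)⁻¹ * Bᵀ * X * A = X - 1) ∧
    (∀ X' : Matrix n n ℝ, X'.PosDef →
      Aᵀ * X' * A - Aᵀ * X' * B * (1 + Bᵀ * X' * B)⁻¹ * Bᵀ * X' * A = X' - 1 →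
      X' = X) := by
  intro A B X
  have hunit (Y : Matrix n n ℝ) (hY : Y.PosDef) : IsUnit (1 + ε ^ 2 • Y).det :=
    (isUnit_iff_isUnit_det _).mp
      (PosDef.one.add_posSemidef (hY.posSemidef.smul (sq_nonneg ε))).isUnit
  have hE : (single j j (1 : ℝ)).PosSemidef := by
    rw [← diagonal_single]
    exact PosSemidef.diagonal (Pi.single_nonneg.mpr zero_le_one)
  have hX : X.PosDef := PosDef.one.add_posSemidef (hE.smul (by positivity))
  refine ⟨hX, ?_, fun X' hX' hX'sol => ?_⟩
  · change riccati A B X = X - 1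
    rw [riccati_single_one_add_smul_single hij _ _ (hunit X hX)]
    simp [X]
  · change riccati A B X' = X' - 1 at hX'sol
    obtain ⟨t, rfl⟩ := exists_eq_one_add_of_riccati_single_eq_sub_one hX'sol
    rw [riccati_single_one_add_smul_single hij _ _ (hunit _ hX'), add_sub_cancel_left] at hX'sol
    simp [X, hX'sol]

theorem riccati_rank_one_solution {n : Type*} [Fintype n] [DecidableEq n]
    (i j : n) (hij : i ≠ j) (ε : ℝ) (hε : 0 < ε) :
    let A : Matrix n n ℝ := Matrix.single i j 1
    let B : Matrix n n ℝ := ε • 1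
    let X : Matrix n n ℝ := 1 + (1 / (1 + ε ^ 2)) • Matrix.single j j 1
    X.PosDef ∧
    (Aᵀ * X * A - Aᵀ * X * B * (1 + Bᵀ * X * B)⁻¹ * Bᵀ * X * A = X - 1) ∧
    (∀ X' : Matrix n n ℝ, X'.PosDef →
      Aᵀ * X' * A - Aᵀ * X' * B * (1 + Bᵀ * X' * B)⁻¹ * Bᵀ * X' * A = X' - 1 →
      X' = X) :=
  riccati_rank_one_solution_general i j hij ε
end

section
/- Let A = e_i e_jᵀ with i ≠ j, B = εI with ε > 0, and K* = −(ε/(1+ε²)) e_i e_jᵀ. For the closed-loop system x(k+1) = (A + B K*) x(k) with x(0) = e_j, the infinite-horizon cost Σ_{k≥1} ‖x(k)‖² + Σ_{k≥0} ‖u(k)‖² with u(k) = K* x(k) equals 1/(1+ε²). -/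
/-!
The closed-loop matrix is `A + ε K* = (1 - ε²/(1+ε²)) e_i e_jᵀ = e_i e_jᵀ / (1+ε²)`, which squares to
zero because `i ≠ j`. Hence `x 1 = e_i / (1+ε²)`, `u 0 = -ε e_i / (1+ε²)` and every later state and
input vanishes, so the cost is `(1 + ε²) / (1+ε²)² = 1 / (1+ε²)`.
-/

open Matrix

section RankOne

variable {n α : Type*} [Fintype n] [DecidableEq n]

lemma single_mulVec_eq_pi_single [NonUnitalNonAssocSemiring α] (i j : n) (c : α) (v : n → α) :
    single i j c *ᵥ v = Pi.single i (c * v j) :=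
  single_mulVec i j c v

lemma rankOne_closedLoop_mulVec [CommSemiring α] (i j : n) (a b c : α) (v : n → α) :
    single i j a *ᵥ v + (b • (1 : Matrix n n α)) *ᵥ ((c • single i j 1) *ᵥ v) =
      Pi.single i ((a + b * c) * v j) := by
  rw [smul_single, smul_mulVec, one_mulVec, single_mulVec_eq_pi_single,
    single_mulVec_eq_pi_single, ← Pi.single_smul, ← Pi.single_add]
  congr 1
  simp only [smul_eq_mul]
  ring

end RankOne

lemma tsum_eq_zeroth_of_succ_eq_zero {M : Type*} [AddCommMonoid M] [TopologicalSpace M]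
    {f : ℕ → M} (h : ∀ k, f (k + 1) = 0) : ∑' k, f k = f 0 :=
  tsum_eq_single 0 fun k hk => by
    obtain ⟨m, rfl⟩ := Nat.exists_eq_succ_of_ne_zero hk
    exact h m

lemma one_add_mul_neg_div (ε : ℝ) : 1 + ε * -(ε / (1 + ε ^ 2)) = 1 / (1 + ε ^ 2) := by
  field_simp
  ring

theorem optimal_cost_rank_one_general {n : Type*} [Fintype n] [DecidableEq n]
    (i j : n) (hij : i ≠ j) (ε : ℝ)
    (x u : ℕ → n → ℝ)
    (hx0 : x 0 = Pi.single j 1)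
    (hu : ∀ k, u k =
      ((-(ε / (1 + ε ^ 2))) • Matrix.single i j (1 : ℝ)).mulVec (x k))
    (hx : ∀ k, x (k + 1) =
      (Matrix.single i j (1 : ℝ)).mulVec (x k) +
        (ε • (1 : Matrix n n ℝ)).mulVec (u k)) :
    (∑' k : ℕ, (x (k + 1)) ⬝ᵥ (x (k + 1))) + (∑' k : ℕ, (u k) ⬝ᵥ (u k)) =
      1 / (1 + ε ^ 2) := by
  have hu' : ∀ k, u k = Pi.single i (-(ε / (1 + ε ^ 2)) * x k j) := fun k => by
    rw [hu, smul_single, single_mulVec_eq_pi_single, smul_eq_mul, mul_one]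
  have hx' : ∀ k, x (k + 1) = Pi.single i (1 / (1 + ε ^ 2) * x k j) := fun k => by
    rw [hx, hu, rankOne_closedLoop_mulVec, one_add_mul_neg_div]
  have hx_j : ∀ k, x (k + 1) j = 0 := fun k => by
    rw [hx', Pi.single_eq_of_ne' hij]
  have hstate : ∑' k, x (k + 1) ⬝ᵥ x (k + 1) = (1 / (1 + ε ^ 2)) ^ 2 := by
    rw [tsum_eq_zeroth_of_succ_eq_zero fun k => by rw [hx' (k + 1), hx_j]; simp]
    simp [hx', hx0, sq]
  have hinput : ∑' k, u k ⬝ᵥ u k = (ε / (1 + ε ^ 2)) ^ 2 := by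
    rw [tsum_eq_zeroth_of_succ_eq_zero fun k => by rw [hu', hx_j]; simp]
    simp [hu', hx0, sq]
  rw [hstate, hinput]
  field_simp

theorem optimal_cost_rank_one {n : Type*} [Fintype n] [DecidableEq n]
    (i j : n) (hij : i ≠ j) (ε : ℝ) (hε : 0 < ε)
    (x u : ℕ → n → ℝ)
    (hx0 : x 0 = Pi.single j 1)
    (hu : ∀ k, u k =
      ((-(ε / (1 + ε ^ 2))) • Matrix.single i j (1 : ℝ)).mulVec (x k))
    (hx : ∀ k, x (k + 1) =
      (Matrix.single i j (1 : ℝ)).mulVec (x k) +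
        (ε • (1 : Matrix n n ℝ)).mulVec (u k)) :
    (∑' k : ℕ, (x (k + 1)) ⬝ᵥ (x (k + 1))) + (∑' k : ℕ, (u k) ⬝ᵥ (u k)) =
      1 / (1 + ε ^ 2) :=
  optimal_cost_rank_one_general i j hij ε x u hx0 hu hx
end
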